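/- arXiv:1407.5169 — 4 statements merged into one kernel-verified Lean document; each statement's English description precedes it below -/
import Mathlib

section
/- Let X be a countably compact topological space, let Y be a T1 topological space, let f : X → Y be a continuous map, and let Z₁ ⊇ Z₂ ⊇ Z₃ ⊇ … be an infinite decreasing sequence of closed subsets of X. Then f(⋂_{q=1}^{∞} Z_q) = ⋂_{q=1}^{∞} f(Z_q). -/
/-- A topological space `X` is *countably compact* if every countable open cover
of `X` has a finite subcover. -/
def IsCountablyCompactSpace (X : Type*) [TopologicalSpace X] : Prop :=
  ∀ U : ℕ → Set X, (∀ n, IsOpen (U n)) → (⋃ n, U n) = Set.univ →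
    ∃ s : Finset ℕ, (⋃ n ∈ s, U n) = Set.univ

/-- If `X` is countably compact, `Y` is T1, `f : X → Y` is continuous and
`Z₁ ⊇ Z₂ ⊇ …` is a decreasing sequence of closed subsets of `X`, then
`f (⋂ q, Z q) = ⋂ q, f (Z q)`. -/
theorem image_iInter_of_countablyCompact
    {X Y : Type*} [TopologicalSpace X] [TopologicalSpace Y] [T1Space Y]
    (hX : IsCountablyCompactSpace X)
    (f : X → Y) (hf : Continuous f)
    (Z : ℕ → Set X) (hZclosed : ∀ q, IsClosed (Z q)) (hZmono : Antitone Z) :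
    f '' (⋂ q, Z q) = ⋂ q, f '' (Z q) := by
  apply Set.Subset.antisymm (Set.image_iInter_subset Z f)
  intro y hy
  simp only [Set.mem_iInter] at hy
  set C : ℕ → Set X := fun q => Z q ∩ f ⁻¹' {y} with hCdef
  have hCne : ∀ q, (C q).Nonempty := by
    intro q
    obtain ⟨x, hx, hfx⟩ := hy q
    exact ⟨x, hx, hfx⟩
  have hCclosed : ∀ q, IsClosed (C q) :=
    fun q => (hZclosed q).inter (isClosed_singleton.preimage hf)
  have hCmono : Antitone C := fun a b h =>
    Set.inter_subset_inter_left _ (hZmono h)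
  rcases Set.eq_empty_or_nonempty (⋂ q, C q) with hemp | ⟨x, hx⟩
  · exfalso
    have hcover : (⋃ n, (C n)ᶜ) = Set.univ := by
      rw [← Set.compl_iInter, hemp, Set.compl_empty]
    obtain ⟨s, hs⟩ := hX (fun n => (C n)ᶜ) (fun n => (hCclosed n).isOpen_compl) hcover
    have hsne : s.Nonempty := by
      obtain ⟨x0, hx0⟩ := hCne 0
      have : x0 ∈ ⋃ n ∈ s, (C n)ᶜ := hs ▸ Set.mem_univ x0
      simp only [Set.mem_iUnion] at this
      obtain ⟨n, hn, _⟩ := this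
      exact ⟨n, hn⟩
    set m := s.max' hsne
    obtain ⟨x, hxm⟩ := hCne m
    have : x ∈ ⋃ n ∈ s, (C n)ᶜ := hs ▸ Set.mem_univ x
    simp only [Set.mem_iUnion] at this
    obtain ⟨n, hn, hxn⟩ := this
    exact hxn (hCmono (s.le_max' n hn) hxm)
  · have hxZ : x ∈ ⋂ q, Z q := by
      simp only [Set.mem_iInter] at hx ⊢
      exact fun q => (hx q).1
    have hfx : f x = y := (Set.mem_iInter.mp hx 0).2
    exact ⟨x, hxZ, hfx⟩
end

section
/- Let X be a topological space equipped with a continuous action of the multiplicative group ℝ₍>0₎ of positive real numbers (the action map ℝ₍>0₎ × X → X is continuous), and let A ⊆ X be an open subset such that (i) the closure of t₀ • A is contained in t₁ • A whenever 0 < t₀ < t₁, and (ii) X = ⋃_{t>0} t • A. Then the radius function r : X → ℝ associated to A is continuous, and for every s ∈ X one has r(s) < 1 if and only if s ∈ A. -/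
open Pointwise

/-- The multiplicative group of positive real numbers. -/
abbrev PReal : Type := {x : ℝ // 0 < x}

/-- The radius function associated to a subset `A` of a space `X` with an action
of the multiplicative group of positive reals:
`r(s) = inf {t > 0 | s ∈ t • A}`. -/
noncomputable def radiusFn {X : Type*} [MulAction PReal X] (A : Set X) (s : X) : ℝ :=
  sInf {t : ℝ | ∃ ht : 0 < t, s ∈ (⟨t, ht⟩ : PReal) • A}

/-- If `A` is open, `closure (t₀ • A) ⊆ t₁ • A` whenever `t₀ < t₁`, and the sets
`t • A` cover `X`, then the radius function is continuous and `r(s) < 1 ↔ s ∈ A`. -/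
theorem radiusFn_continuous_and_lt_one_iff
    {X : Type*} [TopologicalSpace X] [MulAction PReal X] [ContinuousSMul PReal X]
    (A : Set X) (hA : IsOpen A)
    (hclos : ∀ t₀ t₁ : PReal, t₀ < t₁ → closure (t₀ • A) ⊆ t₁ • A)
    (hcover : (⋃ t : PReal, t • A) = Set.univ) :
    Continuous (radiusFn A) ∧ ∀ s : X, radiusFn A s < 1 ↔ s ∈ A := by
  set S : X → Set ℝ := fun s => {t : ℝ | ∃ ht : 0 < t, s ∈ (⟨t, ht⟩ : PReal) • A} with hS
  -- upward closedness
  have hup : ∀ s : X, ∀ t₀ ∈ S s, ∀ t₁ : ℝ, t₀ < t₁ → t₁ ∈ S s := by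
    rintro s t₀ ⟨h₀, hm⟩ t₁ hlt
    have h₁ : (0:ℝ) < t₁ := h₀.trans hlt
    exact ⟨h₁, hclos ⟨t₀, h₀⟩ ⟨t₁, h₁⟩ hlt (subset_closure hm)⟩
  have hne : ∀ s : X, (S s).Nonempty := by
    intro s
    have : s ∈ ⋃ t : PReal, t • A := hcover ▸ Set.mem_univ s
    obtain ⟨t, ht⟩ := Set.mem_iUnion.1 this
    exact ⟨t.1, t.2, ht⟩
  have hbdd : ∀ s : X, BddBelow (S s) := fun s => ⟨0, fun t ht => ht.1.le⟩
  have hr0 : ∀ s : X, 0 ≤ radiusFn A s := fun s => le_csInf (hne s) fun t ht => ht.1.le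
  -- if t ∉ S s and 0 < t then t ≤ r s
  have hle : ∀ s : X, ∀ t : ℝ, 0 < t → t ∉ S s → t ≤ radiusFn A s := by
    intro s t ht hts
    refine le_csInf (hne s) fun u hu => ?_
    by_contra h
    exact hts (hup s u hu t (lt_of_not_ge h))
  have hlt_iff : ∀ s : X, ∀ c : ℝ, radiusFn A s < c ↔ ∃ t ∈ S s, t < c := by
    intro s c; exact csInf_lt_iff (hbdd s) (hne s)
  -- membership characterization
  have hmem : ∀ s : X, radiusFn A s < 1 ↔ s ∈ A := by
    intro s
    constructor
    · intro h
      obtain ⟨t, ⟨ht, hm⟩, htl⟩ := (hlt_iff s 1).1 h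
      have := hclos ⟨t, ht⟩ 1 (by exact_mod_cast htl) (subset_closure hm)
      rwa [one_smul] at this
    · intro hs
      -- the set of u : PReal with u • s ∈ A is open and contains 1
      have hcont : Continuous (fun u : PReal => u • s) :=
        continuous_id.smul continuous_const
      have hopen : IsOpen {u : PReal | u • s ∈ A} := hA.preimage hcont
      have h1 : (1 : PReal) ∈ {u : PReal | u • s ∈ A} := by
        simpa [one_smul] using hs
      -- find u > 1 in this open set
      obtain ⟨V, hV, hVsub⟩ := isOpen_induced_iff.1 hopen
      have h1V : (1 : ℝ) ∈ V := by rw [← hVsub] at h1; exact h1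
      obtain ⟨ε, hε, hball⟩ := Metric.isOpen_iff.1 hV 1 h1V
      set u : ℝ := 1 + ε / 2 with hu
      have hu1 : 1 < u := by simp [hu]; linarith
      have huV : u ∈ V := hball (by
        simp only [Metric.mem_ball, Real.dist_eq, hu, add_sub_cancel_left]
        rw [abs_of_nonneg (by linarith : (0:ℝ) ≤ ε/2)]; linarith)
      have hu0 : (0:ℝ) < u := by linarith
      have huA : (⟨u, hu0⟩ : PReal) • s ∈ A := by
        have : (⟨u, hu0⟩ : PReal) ∈ {u : PReal | u • s ∈ A} := by
          rw [← hVsub]; exact huV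
        exact this
      -- then u⁻¹ ∈ S s and u⁻¹ < 1
      have hinv : u⁻¹ ∈ S s := by
        refine ⟨inv_pos.2 hu0, ?_⟩
        have hkey : (⟨u⁻¹, inv_pos.2 hu0⟩ : PReal) = (⟨u, hu0⟩ : PReal)⁻¹ :=
          Subtype.ext (by rw [Positive.coe_inv])
        rw [hkey, Set.mem_smul_set_iff_inv_smul_mem, inv_inv]
        exact huA
      have : radiusFn A s ≤ u⁻¹ := csInf_le (hbdd s) hinv
      calc radiusFn A s ≤ u⁻¹ := this
        _ < 1 := by rw [inv_lt_one_iff₀]; right; exact hu1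
  refine ⟨?_, hmem⟩
  rw [continuous_iff_continuousAt]
  intro s
  rw [ContinuousAt, tendsto_order]
  constructor
  · intro c hc
    rcases lt_or_ge c 0 with h | h
    · filter_upwards with x; exact h.trans_le (hr0 x)
    · obtain ⟨t₀, ht₀c, ht₀r⟩ := exists_between hc
      obtain ⟨t₁, h01, h1r⟩ := exists_between ht₀r
      have ht₀ : (0:ℝ) < t₀ := h.trans_lt ht₀c
      have ht₁ : (0:ℝ) < t₁ := ht₀.trans h01
      have hs1 : s ∉ (⟨t₁, ht₁⟩ : PReal) • A := by
        intro hm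
        exact absurd (csInf_le (hbdd s) ⟨ht₁, hm⟩) (not_le.2 h1r)
      have hsc : s ∉ closure ((⟨t₀, ht₀⟩ : PReal) • A) := fun h' =>
        hs1 (hclos _ _ (by exact_mod_cast h01) h')
      have hopen : IsOpen (closure ((⟨t₀, ht₀⟩ : PReal) • A))ᶜ := isClosed_closure.isOpen_compl
      filter_upwards [hopen.mem_nhds hsc] with x hx
      have : x ∉ (⟨t₀, ht₀⟩ : PReal) • A := fun h' => hx (subset_closure h')
      exact ht₀c.trans_le (hle x t₀ ht₀ (fun ⟨_, hm⟩ => this hm))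
  · intro c hc
    obtain ⟨t, ⟨ht, hm⟩, htc⟩ := (hlt_iff s c).1 hc
    have hopen : IsOpen ((⟨t, ht⟩ : PReal) • A) := hA.smul _
    filter_upwards [hopen.mem_nhds hm] with x hx
    exact (csInf_le (hbdd x) ⟨ht, hx⟩).trans_lt htc
end

section
/- Let X be a T1 topological space equipped with a continuous action of the multiplicative group ℝ₍>0₎ of positive real numbers, let A ⊆ X be an open subset such that the closure of t₀ • A is contained in t₁ • A whenever 0 < t₀ < t₁ and X = ⋃_{t>0} t • A, and let x₀ ∈ X be a point such that x₀ ∈ t • A for every t > 0 and such that the family {t • A | t > 0} is a neighbourhood basis of x₀ in X. Then for every s ∈ X, the radius function satisfies r(s) = 0 if and only if s = x₀. -/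
open Pointwise

/-- Let `X` be T1 with a continuous action of the positive reals, let `A` be an
open subset with `closure (t₀ • A) ⊆ t₁ • A` for `t₀ < t₁` and `⋃ t, t • A = X`,
and let `x₀` be a point lying in every `t • A` such that `{t • A | t > 0}` is a
neighbourhood basis of `x₀`. Then `r(s) = 0 ↔ s = x₀`. -/
theorem radiusFn_eq_zero_iff
    {X : Type*} [TopologicalSpace X] [T1Space X]
    [MulAction PReal X] [ContinuousSMul PReal X]
    (A : Set X) (hA : IsOpen A)
    (hclos : ∀ t₀ t₁ : PReal, t₀ < t₁ → closure (t₀ • A) ⊆ t₁ • A)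
    (hcover : (⋃ t : PReal, t • A) = Set.univ)
    (x₀ : X) (hx₀ : ∀ t : PReal, x₀ ∈ t • A)
    (hnhds : ∀ t : PReal, t • A ∈ nhds x₀)
    (hbasis : ∀ N ∈ nhds x₀, ∃ t : PReal, t • A ⊆ N) :
    ∀ s : X, radiusFn A s = 0 ↔ s = x₀ := by
  intro s
  have hmono : ∀ t₀ t₁ : PReal, t₀ < t₁ → t₀ • A ⊆ t₁ • A := fun t₀ t₁ h =>
    (subset_closure).trans (hclos t₀ t₁ h)
  constructor
  · intro h0
    by_contra hne
    -- {s}ᶜ is a neighbourhood of x₀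
    have hN : ({s}ᶜ : Set X) ∈ nhds x₀ := by
      apply IsOpen.mem_nhds isOpen_compl_singleton
      simpa using fun h => hne h.symm
    obtain ⟨t, ht⟩ := hbasis _ hN
    have hs_not : s ∉ t • A := fun h => (ht h) rfl
    -- S is nonempty
    obtain ⟨u, hu⟩ : ∃ u : PReal, s ∈ u • A := by
      have := hcover ▸ Set.mem_univ s
      simpa [Set.mem_iUnion] using (hcover.symm ▸ Set.mem_univ s : s ∈ ⋃ t : PReal, t • A)
    have hne' : {r : ℝ | ∃ hr : 0 < r, s ∈ (⟨r, hr⟩ : PReal) • A}.Nonempty :=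
      ⟨u.1, u.2, by simpa using hu⟩
    have hlb : (t : ℝ) ≤ sInf {r : ℝ | ∃ hr : 0 < r, s ∈ (⟨r, hr⟩ : PReal) • A} := by
      apply le_csInf hne'
      rintro r ⟨hr, hmem⟩
      by_contra hlt
      push_neg at hlt
      exact hs_not (hmono ⟨r, hr⟩ t (by exact_mod_cast hlt) hmem)
    rw [radiusFn] at h0
    rw [h0] at hlb
    exact absurd hlb (not_le.mpr t.2)
  · rintro rfl
    have hset : {r : ℝ | ∃ hr : 0 < r, s ∈ (⟨r, hr⟩ : PReal) • A} = Set.Ioi 0 := by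
      ext r
      constructor
      · rintro ⟨hr, -⟩; exact hr
      · intro hr; exact ⟨hr, hx₀ _⟩
    rw [radiusFn, hset, csInf_Ioi]
end

section
/- Let X be a topological space equipped with a continuous action of the multiplicative group ℝ₍>0₎ of positive real numbers, and let r : X → ℝ be a continuous function with r(x) ≥ 0 for all x and r(t • x) = t · r(x) for all t > 0 and x ∈ X. Set U := {x ∈ X | 0 < r(x) < 1} and V := {y ∈ X | r(y) > 0}, and define u : U → X by u(x) := (r(x)/(1 − r(x))) • x and v : V → X by v(y) := ((1 − τ(r(y)))/τ(r(y))) • y, where τ(a) := (−a + √(a² + 4a))/2. Then u maps U into V, v maps V into U, both are continuous, and v(u(x)) = x for all x ∈ U and u(v(y)) = y for all y ∈ V; in particular, u is a homeomorphism from U onto V. -/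
open Pointwise

/-- The function `τ(a) = (−a + √(a² + 4a))/2`. -/
noncomputable def tau (a : ℝ) : ℝ := (-a + Real.sqrt (a ^ 2 + 4 * a)) / 2

lemma tau_pos {a : ℝ} (ha : 0 < a) : 0 < tau a := by
  have h : a < Real.sqrt (a ^ 2 + 4 * a) := by
    calc a = Real.sqrt (a ^ 2) := (Real.sqrt_sq ha.le).symm
    _ < Real.sqrt (a ^ 2 + 4 * a) := Real.sqrt_lt_sqrt (by positivity) (by linarith)
  unfold tau
  exact div_pos (by linarith) (by norm_num)

lemma tau_lt_one {a : ℝ} (ha : 0 < a) : tau a < 1 := by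
  have h : Real.sqrt (a ^ 2 + 4 * a) < a + 2 :=
    (Real.sqrt_lt' (by linarith)).mpr (by nlinarith)
  unfold tau
  rw [div_lt_one (by norm_num : (0 : ℝ) < 2)]
  linarith

/-- The map `u(x) = (r(x)/(1 − r(x))) • x` on `U = {x | 0 < r x < 1}`. -/
noncomputable def uMap {X : Type*} [MulAction PReal X] (r : X → ℝ)
    (x : {x : X // 0 < r x ∧ r x < 1}) : X :=
  (⟨r x.1 / (1 - r x.1), div_pos x.2.1 (by linarith [x.2.2])⟩ : PReal) • x.1

/-- The map `v(y) = ((1 − τ(r(y)))/τ(r(y))) • y` on `V = {y | 0 < r y}`. -/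
noncomputable def vMap {X : Type*} [MulAction PReal X] (r : X → ℝ)
    (y : {y : X // 0 < r y}) : X :=
  (⟨(1 - tau (r y.1)) / tau (r y.1),
    div_pos (by linarith [tau_lt_one y.2]) (tau_pos y.2)⟩ : PReal) • y.1

lemma tau_sq {a : ℝ} (ha : 0 < a) : tau a ^ 2 + a * tau a = a := by
  have hs : Real.sqrt (a ^ 2 + 4 * a) ^ 2 = a ^ 2 + 4 * a :=
    Real.sq_sqrt (by positivity)
  have h2 : 2 * tau a + a = Real.sqrt (a ^ 2 + 4 * a) := by unfold tau; ring
  have h3 : (2 * tau a + a) ^ 2 = a ^ 2 + 4 * a := by rw [h2]; exact hs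
  nlinarith [h3]

lemma tau_eq {a t : ℝ} (ha : 0 < a) (ht : 0 < t) (h : t ^ 2 + a * t = a) :
    tau a = t := by
  have h2 : (2 * t + a) ^ 2 = a ^ 2 + 4 * a := by nlinarith
  have h3 : Real.sqrt (a ^ 2 + 4 * a) = 2 * t + a := by
    rw [← h2, Real.sqrt_sq (by linarith)]
  unfold tau; rw [h3]; ring

lemma key_smul {X : Type*} [MulAction PReal X] (s t : PReal) (z : X)
    (h : (s : ℝ) * t = 1) : s • t • z = z := by
  rw [smul_smul]
  convert one_smul PReal z
  exact Subtype.ext h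

/-- If `r : X → ℝ` is a continuous nonnegative function with `r(t • x) = t·r(x)`
for a continuous action of the positive reals, then `u` is a homeomorphism from
`U = {x | 0 < r x < 1}` onto `V = {y | 0 < r y}` with inverse `v`: in particular
`u` maps `U` into `V`, `v` maps `V` into `U`, both are continuous, and they are
mutually inverse. -/
theorem uMap_homeomorph {X : Type*} [TopologicalSpace X]
    [MulAction PReal X] [ContinuousSMul PReal X]
    (r : X → ℝ) (hr : Continuous r) (hnonneg : ∀ x : X, 0 ≤ r x)
    (hequiv : ∀ (t : PReal) (x : X), r (t • x) = (t : ℝ) * r x) :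
    ∃ e : {x : X // 0 < r x ∧ r x < 1} ≃ₜ {y : X // 0 < r y},
      (∀ x, (e x : X) = uMap r x) ∧ (∀ y, (e.symm y : X) = vMap r y) := by
  have hu : ∀ x : {x : X // 0 < r x ∧ r x < 1}, 0 < r (uMap r x) := by
    intro x
    rw [uMap, hequiv]
    exact mul_pos (div_pos x.2.1 (by linarith [x.2.2])) x.2.1
  have hrv : ∀ y : {y : X // 0 < r y}, r (vMap r y) = tau (r y.1) := by
    intro y
    rw [vMap, hequiv]
    have h1 := tau_sq y.2
    have h2 := tau_pos y.2
    field_simp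
    nlinarith
  have hv : ∀ y : {y : X // 0 < r y}, 0 < r (vMap r y) ∧ r (vMap r y) < 1 := by
    intro y
    rw [hrv]
    exact ⟨tau_pos y.2, tau_lt_one y.2⟩
  have hct : Continuous tau := by
    unfold tau
    exact (continuous_neg.add (Real.continuous_sqrt.comp (by continuity))).div_const 2
  have hcu : Continuous (uMap (X := X) r) := by
    unfold uMap
    exact (Continuous.subtype_mk
      (((hr.comp continuous_subtype_val).div
        (continuous_const.sub (hr.comp continuous_subtype_val))
        (fun x => (sub_pos.2 x.2.2).ne')) ) _).smul continuous_subtype_val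
  have hcv : Continuous (vMap (X := X) r) := by
    unfold vMap
    exact (Continuous.subtype_mk
      ((continuous_const.sub (hct.comp (hr.comp continuous_subtype_val))).div
        (hct.comp (hr.comp continuous_subtype_val))
        (fun y => (tau_pos y.2).ne')) _).smul continuous_subtype_val
  have left_inv : ∀ x, (⟨vMap r ⟨uMap r x, hu x⟩, hv _⟩ :
      {x : X // 0 < r x ∧ r x < 1}) = x := by
    intro x
    apply Subtype.ext
    have hx1 := x.2.1; have hx2 := x.2.2
    have hb : r (uMap r x) = r x.1 / (1 - r x.1) * r x.1 := by rw [uMap, hequiv]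
    have htb : tau (r (uMap r x)) = r x.1 := by
      apply tau_eq (hu x) hx1
      have hne : (1 : ℝ) - r x.1 ≠ 0 := (sub_pos.2 hx2).ne'
      rw [hb]; field_simp; ring
    show vMap r ⟨uMap r x, hu x⟩ = x.1
    have hne : (0:ℝ) < 1 - r x.1 := sub_pos.2 hx2
    have e1 : vMap r ⟨uMap r x, hu x⟩ =
        (⟨(1 - tau (r (uMap r x))) / tau (r (uMap r x)),
          div_pos (by linarith [tau_lt_one (hu x)]) (tau_pos (hu x))⟩ : PReal) •
        ((⟨r x.1 / (1 - r x.1), div_pos x.2.1 hne⟩ : PReal) • x.1) := rfl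
    rw [e1]
    apply key_smul
    show (1 - tau (r (uMap r x))) / tau (r (uMap r x)) * (r x.1 / (1 - r x.1)) = 1
    rw [htb]
    field_simp
  have right_inv : ∀ y, (⟨uMap r ⟨vMap r y, hv y⟩, hu _⟩ :
      {y : X // 0 < r y}) = y := by
    intro y
    apply Subtype.ext
    have hy := y.2
    have h1 : r (vMap r y) = tau (r y.1) := hrv y
    have h2 := tau_pos hy
    have h3 := tau_lt_one hy
    show uMap r ⟨vMap r y, hv y⟩ = y.1
    have e1 : uMap r ⟨vMap r y, hv y⟩ =
        (⟨r (vMap r y) / (1 - r (vMap r y)),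
          div_pos (hv y).1 (by linarith [(hv y).2])⟩ : PReal) •
        ((⟨(1 - tau (r y.1)) / tau (r y.1),
          div_pos (by linarith) h2⟩ : PReal) • y.1) := rfl
    rw [e1]
    apply key_smul
    show r (vMap r y) / (1 - r (vMap r y)) * ((1 - tau (r y.1)) / tau (r y.1)) = 1
    rw [h1, div_mul_div_comm, mul_comm]
    exact div_self (ne_of_gt (mul_pos (by linarith) h2))
  refine ⟨⟨⟨fun x => ⟨uMap r x, hu x⟩, fun y => ⟨vMap r y, hv y⟩,
    left_inv, right_inv⟩, hcu.subtype_mk _, hcv.subtype_mk _⟩,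
    fun x => rfl, fun y => rfl⟩
end
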